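/- Let F be a group generated by a finite set X, and let R be a normal subgroup of F that is the normal closure of a finite set T. Then the subgroup [F,R] generated by all commutators [f,r] with f ∈ F and r ∈ R equals the normal closure in F of the finite set {[x,t] : x ∈ X, t ∈ T}. -/

import Mathlib

/-! Let `N` be the normal closure of the commutators `⁅x, t⁆`. In `F ⧸ N` each `t ∈ T` commutes
with the generators `X`, hence is central; so the normal subgroup `R` generated by `T` is central
modulo `N`, which says exactly `⁅F, R⁆ ≤ N`. -/

open scoped commutatorElement

namespace Subgroup

variable {G : Type*} [Group G]

theorem mem_center_iff_of_closure_eq_top {S : Set G} (hS : closure S = ⊤) {z : G} :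
    z ∈ center G ↔ ∀ s ∈ S, Commute s z := by
  rw [← centralizer_univ, ← coe_top, ← hS, centralizer_closure, mem_centralizer_iff]
  rfl

theorem commutatorElement_mem_iff_commute_mk (N : Subgroup G) [N.Normal] {x y : G} :
    ⁅x, y⁆ ∈ N ↔ Commute (x : G ⧸ N) (y : G ⧸ N) := by
  rw [← QuotientGroup.eq_one_iff, ← commutatorElement_eq_one_iff_commute,
    ← QuotientGroup.mk'_apply, map_commutatorElement]
  rfl

theorem mk_mem_center_iff_of_closure_eq_top {S : Set G} (hS : closure S = ⊤)
    (N : Subgroup G) [N.Normal] {x : G} :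
    (x : G ⧸ N) ∈ center (G ⧸ N) ↔ ∀ s ∈ S, ⁅s, x⁆ ∈ N := by
  have hS' : closure ((QuotientGroup.mk' N) '' S) = ⊤ := by
    rw [← MonoidHom.map_closure, hS, ← MonoidHom.range_eq_map,
      MonoidHom.range_eq_top_of_surjective _ (QuotientGroup.mk'_surjective N)]
  simp_rw [mem_center_iff_of_closure_eq_top hS', Set.forall_mem_image,
    commutatorElement_mem_iff_commute_mk]
  rfl

theorem commutator_top_left_le_iff_le_comap_center (H N : Subgroup G) [N.Normal] :
    ⁅(⊤ : Subgroup G), H⁆ ≤ N ↔ H ≤ (center (G ⧸ N)).comap (QuotientGroup.mk' N) := by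
  rw [← upperCentralSeriesStep_eq_comap_center, commutator_comm, commutator_le]
  simp only [mem_top, forall_const]
  rfl

end Subgroup

theorem commutator_top_eq_normalClosure_general (F : Type*) [Group F] (X T : Finset F)
    (hX : Subgroup.closure (X : Set F) = ⊤)
    (R : Subgroup F)
    (hT : Subgroup.normalClosure (T : Set F) = R) :
    ⁅(⊤ : Subgroup F), R⁆
      = Subgroup.normalClosure ((fun p : F × F => ⁅p.1, p.2⁆) '' ((X : Set F) ×ˢ (T : Set F))) := by
  subst hT
  refine le_antisymm ?_ (Subgroup.normalClosure_le_normal ?_)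
  · rw [Subgroup.commutator_top_left_le_iff_le_comap_center]
    exact Subgroup.normalClosure_le_normal fun t ht =>
      (Subgroup.mk_mem_center_iff_of_closure_eq_top hX _).2
        fun x hx => Subgroup.subset_normalClosure ⟨(x, t), ⟨hx, ht⟩, rfl⟩
  · rintro _ ⟨⟨x, t⟩, ⟨-, ht⟩, rfl⟩
    exact Subgroup.commutator_mem_commutator (Subgroup.mem_top x)
      (Subgroup.subset_normalClosure ht)

/-- Let `F` be a group generated by a finite set `X` and `R` a normal subgroup of `F`
which is the normal closure of a finite set `T`. Then the subgroup `[F,R]` generated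
by all commutators `[f,r]` with `f ∈ F`, `r ∈ R` equals the normal closure of the
finite set `{[x,t] : x ∈ X, t ∈ T}`. -/
theorem commutator_top_eq_normalClosure (F : Type*) [Group F] (X T : Finset F)
    (hX : Subgroup.closure (X : Set F) = ⊤)
    (R : Subgroup F) (hR : R.Normal)
    (hT : Subgroup.normalClosure (T : Set F) = R) :
    ⁅(⊤ : Subgroup F), R⁆
      = Subgroup.normalClosure ((fun p : F × F => ⁅p.1, p.2⁆) '' ((X : Set F) ×ˢ (T : Set F))) :=
  commutator_top_eq_normalClosure_general F X T hX R hT
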